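/- arXiv:1101.1687 — 2 statements merged into one kernel-verified Lean document; each statement's English description precedes it below -/
import Mathlib

section
/- Let V be a finite-dimensional vector space over ℂ, Γ a linearly ordered set, and v : V∖{0} → Γ a pre-valuation with one-dimensional leaves. Then there exists a ℂ-vector-space basis B of V such that the values v(b), b ∈ B, are pairwise distinct (i.e., v restricted to B is injective). -/
/-!
Nonzero vectors with pairwise distinct values are linearly independent: in a sum of such
vectors the term of least value cannot be cancelled, because by the ultrametric inequality
the value of the sum is the least value of its terms. So choosing one vector of each value
gives an independent family, and finite dimension makes the set of values finite. This
family spans: a vector `g` outside its span of largest possible value could, since the leaf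
of `v g` is one-dimensional, be corrected by a multiple of the chosen vector of value `v g`
to a vector outside the span of strictly larger value.
-/

section

variable {K V Γ ι : Type*} [DivisionRing K] [AddCommGroup V] [Module K V] [LinearOrder Γ]

variable (K) in
structure IsPrevaluation (v : V → Γ) : Prop where
  min_le_add : ∀ f g : V, f ≠ 0 → g ≠ 0 → f + g ≠ 0 → min (v f) (v g) ≤ v (f + g)
  smul_eq : ∀ (c : K) (f : V), c ≠ 0 → f ≠ 0 → v (c • f) = v f

namespace IsPrevaluation

variable {v : V → Γ} (hv : IsPrevaluation K v)
include hv

theorem neg_eq {x : V} (hx : x ≠ 0) : v (-x) = v x := by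
  simpa using hv.smul_eq (-1) x (neg_ne_zero.mpr one_ne_zero) hx

theorem add_eq_of_lt {x y : V} (hx : x ≠ 0) (hy : y ≠ 0) (hlt : v x < v y) :
    x + y ≠ 0 ∧ v (x + y) = v x := by
  have hxy : x + y ≠ 0 := by
    intro h
    rw [eq_neg_of_add_eq_zero_right h, hv.neg_eq hx] at hlt
    exact hlt.false
  refine ⟨hxy, le_antisymm ?_ ?_⟩
  · have h := hv.min_le_add (x + y) (-y) hxy (neg_ne_zero.mpr hy) (by simpa using hx)
    rw [add_neg_cancel_right, hv.neg_eq hy, min_le_iff] at h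
    exact h.resolve_right hlt.not_ge
  · simpa [hlt.le] using hv.min_le_add x y hx hy hxy

theorem add_eq_min_of_ne {x y : V} (hx : x ≠ 0) (hy : y ≠ 0) (hne : v x ≠ v y) :
    x + y ≠ 0 ∧ v (x + y) = min (v x) (v y) := by
  rcases hne.lt_or_gt with hlt | hlt
  · simpa [hlt.le] using hv.add_eq_of_lt hx hy hlt
  · simpa [add_comm x, hlt.le] using hv.add_eq_of_lt hy hx hlt

theorem sum_eq_inf' {g : ι → V} {t : Finset ι} (ht : t.Nonempty) (hg : ∀ i ∈ t, g i ≠ 0)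
    (hinj : Set.InjOn (v ∘ g) t) :
    ∑ i ∈ t, g i ≠ 0 ∧ v (∑ i ∈ t, g i) = t.inf' ht (v ∘ g) := by
  induction ht using Finset.Nonempty.cons_induction with
  | singleton a => simpa using hg a (by simp)
  | cons a s has hs ih =>
    obtain ⟨hsum, hvsum⟩ := ih (fun i hi => hg i (by simp [hi]))
      (hinj.mono (Finset.coe_subset.mpr (Finset.subset_cons has)))
    obtain ⟨i, hi, hvi⟩ := Finset.exists_mem_eq_inf' hs (v ∘ g)
    have hne : v (g a) ≠ v (∑ i ∈ s, g i) := by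
      rw [hvsum, hvi]
      exact fun h => has (hinj (by simp) (by simp [hi]) h ▸ hi)
    rw [Finset.sum_cons, Finset.inf'_cons hs, ← hvsum]
    exact hv.add_eq_min_of_ne (hg a (by simp)) hsum hne

theorem linearIndependent {f : ι → V} (hf : ∀ i, f i ≠ 0)
    (hinj : Function.Injective (v ∘ f)) : LinearIndependent K f := by
  rw [linearIndependent_iff]
  intro l hl
  by_contra hl0
  have hterm : ∀ i ∈ l.support, l i • f i ≠ 0 := fun i hi =>
    smul_ne_zero (Finsupp.mem_support_iff.mp hi) (hf i)
  have hvterm : Set.InjOn (v ∘ fun i => l i • f i) l.support := fun i hi j hj h => by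
    simp only [Function.comp_apply, hv.smul_eq _ _ (Finsupp.mem_support_iff.mp hi) (hf i),
      hv.smul_eq _ _ (Finsupp.mem_support_iff.mp hj) (hf j)] at h
    exact hinj h
  rw [Finsupp.linearCombination_apply, Finsupp.sum] at hl
  exact (hv.sum_eq_inf' (Finsupp.support_nonempty_iff.mpr hl0) hterm hvterm).1 hl

end IsPrevaluation

-- Requiring also `c ≠ 0` would change nothing: `c = 0` gives `g = 0` or `v g < v g`.
variable (K) in
def HasOneDimLeaves (v : V → Γ) : Prop :=
  ∀ f g : V, f ≠ 0 → g ≠ 0 → v f = v g →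
    ∃ c : K, g - c • f = 0 ∨ v g < v (g - c • f)

theorem HasOneDimLeaves.span_eq_top {v : V → Γ} (hleaves : HasOneDimLeaves K v)
    (hfin : (v '' {x | x ≠ 0}).Finite) {s : Set V} (hs0 : ∀ x ∈ s, x ≠ 0)
    (hs : Set.SurjOn v s (v '' {x | x ≠ 0})) : Submodule.span K s = ⊤ := by
  set W := Submodule.span K s
  by_contra hW
  obtain ⟨g₀, -, hg₀⟩ := SetLike.exists_of_lt (lt_top_iff_ne_top.mpr hW)
  have hsub : {x | x ∉ W} ⊆ {x | x ≠ 0} := fun x hx h => hx (h ▸ W.zero_mem)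
  obtain ⟨_, ⟨g, hgW, rfl⟩, hmax⟩ := Set.exists_max_image (v '' {x | x ∉ W}) id
    (hfin.subset (Set.image_mono hsub)) ⟨_, g₀, hg₀, rfl⟩
  obtain ⟨y, hys, hvy⟩ := hs ⟨g, hsub hgW, rfl⟩
  have hyW : y ∈ W := Submodule.subset_span hys
  obtain ⟨c, hc | hc⟩ := hleaves y g (hs0 y hys) (hsub hgW) hvy
  · exact hgW (by simpa [sub_eq_zero.mp hc] using W.smul_mem c hyW)
  · have hg'W : g - c • y ∉ W := fun h => hgW (by simpa using W.add_mem h (W.smul_mem c hyW))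
    exact (hmax _ ⟨_, hg'W, rfl⟩).not_gt hc

end

/-- If `v` is a pre-valuation with one-dimensional leaves on a
finite-dimensional complex vector space `V`, then `V` has a basis `B` (a set of vectors)
on which `v` takes pairwise distinct values. -/
theorem prevaluation_one_dim_leaves_exists_basis_distinct_values
    (V : Type*) [AddCommGroup V] [Module ℂ V] [FiniteDimensional ℂ V]
    (Γ : Type*) [LinearOrder Γ]
    (v : V → Γ)
    (hv_add : ∀ f g : V, f ≠ 0 → g ≠ 0 → f + g ≠ 0 → min (v f) (v g) ≤ v (f + g))
    (hv_smul : ∀ (c : ℂ) (f : V), c ≠ 0 → f ≠ 0 → v (c • f) = v f)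
    (hv_leaves : ∀ f g : V, f ≠ 0 → g ≠ 0 → v f = v g →
      ∃ c : ℂ, c ≠ 0 ∧ (g - c • f = 0 ∨ v g < v (g - c • f))) :
    ∃ B : Set V, Set.InjOn v B ∧ ∃ b : Module.Basis B ℂ V, ∀ x : B, b x = (x : V) := by
  have hv : IsPrevaluation ℂ v := ⟨hv_add, hv_smul⟩
  obtain ⟨B, hB0, hBv⟩ := Set.exists_subset_bijOn {x : V | x ≠ 0} v
  have hli : LinearIndepOn ℂ id B :=
    hv.linearIndependent (fun x => hB0 x.2) hBv.injOn.injective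
  have hfin : (v '' {x | x ≠ 0}).Finite := by
    rw [← hBv.image_eq]
    exact (Set.finite_coe_iff.mp hli.finite).image v
  have hleaves : HasOneDimLeaves ℂ v := fun f g hf hg h =>
    (hv_leaves f g hf hg h).imp fun _ => And.right
  have hspan : Submodule.span ℂ B = ⊤ := hleaves.span_eq_top hfin hB0 hBv.surjOn
  exact ⟨B, hBv.injOn, Module.Basis.mk hli (by simp [hspan]), Module.Basis.mk_apply _ _⟩
end

section
/- Let F be a field containing ℂ, Γ a linearly ordered additive abelian group, and v : F∖{0} → Γ a valuation with one-dimensional leaves (with respect to the ℂ-vector space structure of F). Let A = ⊕_{k≥0} A_k be a graded ℂ-subalgebra of the polynomial ring F[t] such that each graded piece A_k is finite-dimensional over ℂ. Let ṽ : A∖{0} → ℤ × Γ be the extended valuation ṽ(∑_{i≤s} f_i t^i) = (s, v(f_s)) (f_s ≠ 0 the top coefficient), where ℤ × Γ is ordered by (k,x) > (ℓ,y) iff k < ℓ, or k = ℓ and x > y. Suppose f₁, …, f_t ∈ A∖{0} are such that ṽ(f₁), …, ṽ(f_t) generate the value semigroup S(A, ṽ) = {ṽ(f) : f ∈ A∖{0}}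 (every element of S(A, ṽ) is a finite sum, with repetitions allowed, of the ṽ(f_i)). Then f₁, …, f_t generate A as a ℂ-algebra; that is, every element of A is a polynomial with ℂ-coefficients in f₁, …, f_t. -/
/-!
Subduction. For `0 ≠ p ∈ A`, the hypothesis on the value semigroup gives a monomial
`q = ∏ fᵢ ^ mᵢ` with `ṽ q = ṽ p`, and one-dimensional leaves give `c : ℂ` such that `p - c • q`
is `0`, has smaller degree, or has the same degree `d` and a leading coefficient of larger value.
In the last case the subspace `{x ∈ A_d | x = 0 ∨ v(lc p) ≤ v x}` of the finite-dimensional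
`A_d` shrinks strictly, so (degree, dimension of that subspace) decreases lexicographically and
the process ends, writing `p` as a `ℂ`-linear combination of monomials in the `fᵢ`.
-/
/-- The `k`-th graded piece of a graded subalgebra `A ⊆ F[t]`: the space of elements `x ∈ F`
such that `x·t^k ∈ A`. -/
def gradedPiece {F : Type*} [Field F] [Algebra ℂ F]
    (A : Subalgebra ℂ (Polynomial F)) (k : ℕ) : Submodule ℂ F where
  carrier := {x : F | Polynomial.C x * Polynomial.X ^ k ∈ A}
  add_mem' := by
    intro a b ha hb
    rw [Set.mem_setOf_eq, map_add, add_mul]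
    exact add_mem ha hb
  zero_mem' := by
    simp only [Set.mem_setOf_eq, map_zero, zero_mul]
    exact zero_mem A
  smul_mem' := by
    intro c x hx
    rw [Set.mem_setOf_eq, ← Polynomial.smul_C, smul_mul_assoc]
    exact A.smul_mem hx c

open Polynomial Module Finset

theorem subset_of_forall_exists_sub_lt {M T α : Type*} [AddGroup M] [SetLike T M]
    [AddSubgroupClass T M] [LT α] [WellFoundedLT α] {A : Set M} {B : T} (μ : M → α)
    (h : ∀ p ∈ A, p ≠ 0 → ∃ q ∈ B, p - q ∈ A ∧ (p - q = 0 ∨ μ (p - q) < μ p)) :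
    A ⊆ B := by
  intro p hpA
  induction hμ : μ p using WellFoundedLT.induction generalizing p with
  | _ a ih =>
  by_cases hp : p = 0
  · rw [hp]; exact zero_mem B
  obtain ⟨q, hqB, hrA, hr⟩ := h p hpA hp
  have hrB : p - q ∈ B := by
    rcases hr with hr | hr
    · rw [hr]; exact zero_mem B
    · exact ih _ (hμ ▸ hr) hrA rfl
  simpa using add_mem hrB hqB

namespace Polynomial

variable {R S : Type*} [Ring R] [SMulZeroClass S R] {p q : R[X]} {c : S}

theorem natDegree_sub_smul_le (hq : q.natDegree = p.natDegree) :
    (p - c • q).natDegree ≤ p.natDegree :=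
  (natDegree_sub_le _ _).trans (max_le le_rfl ((natDegree_smul_le c q).trans hq.le))

theorem coeff_sub_smul_natDegree (hq : q.natDegree = p.natDegree) :
    (p - c • q).coeff p.natDegree = p.leadingCoeff - c • q.leadingCoeff := by
  simp only [coeff_sub, coeff_smul, leadingCoeff, hq]

theorem sub_smul_eq_zero_or_natDegree_lt (hq : q.natDegree = p.natDegree)
    (h : p.leadingCoeff - c • q.leadingCoeff = 0) :
    p - c • q = 0 ∨ (p - c • q).natDegree < p.natDegree := by
  refine or_iff_not_imp_left.mpr fun hr => (natDegree_sub_smul_le hq).lt_of_ne fun hdeg => hr ?_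
  rw [← leadingCoeff_eq_zero, leadingCoeff, hdeg, coeff_sub_smul_natDegree hq, h]

theorem natDegree_sub_smul_eq (hq : q.natDegree = p.natDegree)
    (h : p.leadingCoeff - c • q.leadingCoeff ≠ 0) : (p - c • q).natDegree = p.natDegree :=
  natDegree_eq_of_le_of_coeff_ne_zero (natDegree_sub_smul_le hq)
    (by rwa [coeff_sub_smul_natDegree hq])

theorem leadingCoeff_sub_smul (hq : q.natDegree = p.natDegree)
    (h : p.leadingCoeff - c • q.leadingCoeff ≠ 0) :
    (p - c • q).leadingCoeff = p.leadingCoeff - c • q.leadingCoeff := by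
  rw [leadingCoeff, natDegree_sub_smul_eq hq h, coeff_sub_smul_natDegree hq]

end Polynomial

namespace Sagbi

section Multiplicativity

variable {F Γ : Type*} [CommMonoidWithZero F] [Nontrivial F] [AddCommGroup Γ] {v : F → Γ}

theorem val_one (hv_mul : ∀ f g : F, f ≠ 0 → g ≠ 0 → v (f * g) = v f + v g) : v 1 = 0 := by
  simpa using hv_mul 1 1 one_ne_zero one_ne_zero

theorem val_prod [NoZeroDivisors F]
    (hv_mul : ∀ f g : F, f ≠ 0 → g ≠ 0 → v (f * g) = v f + v g) {ι : Type*} (s : Finset ι)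
    {x : ι → F} (hx : ∀ i ∈ s, x i ≠ 0) : v (∏ i ∈ s, x i) = ∑ i ∈ s, v (x i) := by
  classical
  induction s using Finset.induction_on with
  | empty => simpa using val_one hv_mul
  | insert a s ha ih =>
    have hs : ∀ i ∈ s, x i ≠ 0 := fun i hi => hx i (mem_insert_of_mem hi)
    rw [prod_insert ha, sum_insert ha, hv_mul _ _ (hx a (mem_insert_self a s))
      (prod_ne_zero_iff.mpr hs), ih hs]

theorem val_pow [NoZeroDivisors F]
    (hv_mul : ∀ f g : F, f ≠ 0 → g ≠ 0 → v (f * g) = v f + v g) {x : F} (hx : x ≠ 0) (n : ℕ) :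
    v (x ^ n) = n • v x := by
  simpa using val_prod hv_mul (range n) (x := fun _ => x) fun _ _ => hx

end Multiplicativity

theorem extVal_prod_pow {F Γ : Type*} [CommRing F] [IsDomain F] [AddCommGroup Γ] {v : F → Γ}
    (hv_mul : ∀ f g : F, f ≠ 0 → g ≠ 0 → v (f * g) = v f + v g) {vt : F[X] → ℤ × Γ}
    (hvt : ∀ p : F[X], p ≠ 0 → vt p = ((p.natDegree : ℤ), v p.leadingCoeff)) {ι : Type*}
    (s : Finset ι) {f : ι → F[X]} (hf : ∀ i ∈ s, f i ≠ 0) (m : ι → ℕ) :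
    vt (∏ i ∈ s, f i ^ m i) = ∑ i ∈ s, m i • vt (f i) := by
  have hlc : ∀ i ∈ s, (f i).leadingCoeff ≠ 0 := fun i hi => leadingCoeff_ne_zero.mpr (hf i hi)
  rw [hvt _ (prod_ne_zero_iff.mpr fun i hi => pow_ne_zero _ (hf i hi)),
    sum_congr rfl fun i hi => by rw [hvt _ (hf i hi)]]
  ext
  · simp [Prod.fst_sum, natDegree_prod _ _ fun i hi => pow_ne_zero _ (hf i hi)]
  · simp only [Prod.snd_sum, Prod.smul_mk, leadingCoeff_prod, leadingCoeff_pow]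
    rw [val_prod hv_mul s fun i hi => pow_ne_zero _ (hlc i hi)]
    exact sum_congr rfl fun i hi => val_pow hv_mul (hlc i hi) _

section Filtration

variable {K F Γ : Type*} [Semiring K] [AddCommMonoid F] [Module K F] [LinearOrder Γ] (v : F → Γ)
  (hv_add : ∀ f g : F, f ≠ 0 → g ≠ 0 → f + g ≠ 0 → min (v f) (v g) ≤ v (f + g))
  (hv_smul : ∀ (c : K) (f : F), c ≠ 0 → f ≠ 0 → v (c • f) = v f)

def valuationFiltration (γ : Γ) : Submodule K F where
  carrier := {x | x = 0 ∨ γ ≤ v x}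
  zero_mem' := Or.inl rfl
  add_mem' := by
    intro a b ha hb
    by_cases ha0 : a = 0
    · rwa [ha0, zero_add]
    by_cases hb0 : b = 0
    · rwa [hb0, add_zero]
    by_cases hab : a + b = 0
    · exact Or.inl hab
    exact Or.inr ((le_min (ha.resolve_left ha0) (hb.resolve_left hb0)).trans
      (hv_add a b ha0 hb0 hab))
  smul_mem' := by
    rintro c x (rfl | hx)
    · simp
    by_cases hc : c = 0
    · simp [hc]
    by_cases hx0 : x = 0
    · simp [hx0]
    exact Or.inr ((hv_smul c x hc hx0).symm ▸ hx)

variable {v hv_add hv_smul}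

theorem valuationFiltration_antitone : Antitone (valuationFiltration v hv_add hv_smul) :=
  fun _ _ hγ _ hx => hx.imp id hγ.trans

end Filtration

theorem finrank_inf_valuationFiltration_lt {K F Γ : Type*} [DivisionRing K] [AddCommGroup F]
    [Module K F] [LinearOrder Γ] {v : F → Γ}
    {hv_add : ∀ f g : F, f ≠ 0 → g ≠ 0 → f + g ≠ 0 → min (v f) (v g) ≤ v (f + g)}
    {hv_smul : ∀ (c : K) (f : F), c ≠ 0 → f ≠ 0 → v (c • f) = v f}
    {V : Submodule K F} [FiniteDimensional K V] {x : F} (hxV : x ∈ V) (hx : x ≠ 0) {γ : Γ}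
    (hγ : v x < γ) :
    finrank K ↥(V ⊓ valuationFiltration v hv_add hv_smul γ)
      < finrank K ↥(V ⊓ valuationFiltration v hv_add hv_smul (v x)) := by
  have : FiniteDimensional K ↥(V ⊓ valuationFiltration v hv_add hv_smul (v x)) :=
    Submodule.finiteDimensional_of_le inf_le_left
  refine Submodule.finrank_lt_finrank_of_lt (SetLike.lt_iff_le_and_exists.mpr
    ⟨inf_le_inf_left V (valuationFiltration_antitone hγ.le), x,
      Submodule.mem_inf.mpr ⟨hxV, Or.inr le_rfl⟩, ?_⟩)
  rintro ⟨-, hx0 | hxγ⟩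
  exacts [hx hx0, hγ.not_ge hxγ]

section Subduction

variable {F Γ : Type*} [Field F] [Algebra ℂ F] [LinearOrder Γ] (v : F → Γ)
  (hv_add : ∀ f g : F, f ≠ 0 → g ≠ 0 → f + g ≠ 0 → min (v f) (v g) ≤ v (f + g))
  (hv_smul : ∀ (c : ℂ) (f : F), c ≠ 0 → f ≠ 0 → v (c • f) = v f) (A : Subalgebra ℂ F[X])

noncomputable def subductionRank (p : F[X]) : ℕ ×ₗ ℕ :=
  toLex (p.natDegree, finrank ℂ ↥(gradedPiece A p.natDegree ⊓
    valuationFiltration v hv_add hv_smul (v p.leadingCoeff)))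

variable {v hv_add hv_smul A}

theorem subductionRank_sub_smul_lt
    (hA_graded : ∀ p ∈ A, ∀ k : ℕ, C (p.coeff k) * X ^ k ∈ A)
    (hA_findim : ∀ k : ℕ, FiniteDimensional ℂ ↥(gradedPiece A k)) {p q : F[X]} (hpA : p ∈ A)
    (hp : p ≠ 0) (hq : q.natDegree = p.natDegree) {c : ℂ}
    (hc : p.leadingCoeff - c • q.leadingCoeff = 0 ∨
      v p.leadingCoeff < v (p.leadingCoeff - c • q.leadingCoeff)) :
    p - c • q = 0 ∨
      subductionRank v hv_add hv_smul A (p - c • q) < subductionRank v hv_add hv_smul A p := by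
  by_cases h : p.leadingCoeff - c • q.leadingCoeff = 0
  · exact (sub_smul_eq_zero_or_natDegree_lt hq h).imp_right
      fun hdeg => Prod.Lex.toLex_lt_toLex.mpr (Or.inl hdeg)
  have hdeg := natDegree_sub_smul_eq hq h
  refine Or.inr (Prod.Lex.toLex_lt_toLex.mpr (Or.inr ⟨hdeg, ?_⟩))
  have hlc : p.leadingCoeff ∈ gradedPiece A p.natDegree := hA_graded p hpA p.natDegree
  have := hA_findim p.natDegree
  dsimp only
  rw [hdeg, leadingCoeff_sub_smul hq h]
  exact finrank_inf_valuationFiltration_lt hlc (leadingCoeff_ne_zero.mpr hp) (hc.resolve_left h)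

end Subduction

end Sagbi

theorem sagbi_generation_for_graded_algebras_general
    (F : Type*) [Field F] [Algebra ℂ F]
    (Γ : Type*) [AddCommGroup Γ] [LinearOrder Γ]
    (v : F → Γ)
    (hv_add : ∀ f g : F, f ≠ 0 → g ≠ 0 → f + g ≠ 0 → min (v f) (v g) ≤ v (f + g))
    (hv_smul : ∀ (c : ℂ) (f : F), c ≠ 0 → f ≠ 0 → v (c • f) = v f)
    (hv_mul : ∀ f g : F, f ≠ 0 → g ≠ 0 → v (f * g) = v f + v g)
    (hv_leaves : ∀ f g : F, f ≠ 0 → g ≠ 0 → v f = v g →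
      ∃ c : ℂ, c ≠ 0 ∧ (g - c • f = 0 ∨ v g < v (g - c • f)))
    (A : Subalgebra ℂ (Polynomial F))
    -- `A` is graded: it contains the homogeneous components of all its elements
    (hA_graded : ∀ p ∈ A, ∀ k : ℕ, Polynomial.C (p.coeff k) * Polynomial.X ^ k ∈ A)
    -- the graded pieces are finite-dimensional over `ℂ`
    (hA_findim : ∀ k : ℕ, FiniteDimensional ℂ ↥(gradedPiece A k))
    -- the extended valuation `ṽ`
    (vt : Polynomial F → ℤ × Γ)
    (hvt : ∀ p : Polynomial F, p ≠ 0 → vt p = ((p.natDegree : ℤ), v p.leadingCoeff))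
    (t : ℕ) (f : Fin t → Polynomial F)
    (hfA : ∀ i, f i ∈ A) (hf_ne : ∀ i, f i ≠ 0)
    -- the values `ṽ (f i)` generate the value semigroup `S(A, ṽ)`
    (hgen : ∀ p ∈ A, p ≠ 0 → ∃ m : Fin t → ℕ, vt p = ∑ i, m i • vt (f i)) :
    A ≤ Algebra.adjoin ℂ (Set.range f) := by
  refine SetLike.coe_subset_coe.mp <|
    subset_of_forall_exists_sub_lt (Sagbi.subductionRank v hv_add hv_smul A) fun p hpA hp => ?_
  obtain ⟨m, hm⟩ := hgen p hpA hp
  set q := ∏ i, f i ^ m i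
  have hq : q ≠ 0 := prod_ne_zero_iff.mpr fun i _ => pow_ne_zero _ (hf_ne i)
  have hvq : vt q = vt p := by rw [hm, Sagbi.extVal_prod_pow hv_mul hvt _ fun i _ => hf_ne i]
  rw [hvt q hq, hvt p hp, Prod.mk.injEq, Nat.cast_inj] at hvq
  obtain ⟨c, -, hc⟩ := hv_leaves _ _ (leadingCoeff_ne_zero.mpr hq)
    (leadingCoeff_ne_zero.mpr hp) hvq.2
  have hqB : q ∈ Algebra.adjoin ℂ (Set.range f) :=
    prod_mem fun i _ => pow_mem (Algebra.subset_adjoin (Set.mem_range_self i)) _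
  have hqA : q ∈ A := prod_mem fun i _ => pow_mem (hfA i) _
  exact ⟨c • q, Subalgebra.smul_mem _ hqB c, sub_mem hpA (Subalgebra.smul_mem _ hqA c),
    Sagbi.subductionRank_sub_smul_lt hA_graded hA_findim hpA hp hvq.1 hc⟩

/-- Let `F` be a field containing `ℂ`, `v` a valuation on `F` with
one-dimensional leaves, and `A = ⊕_k A_k` a graded `ℂ`-subalgebra of `F[t]` with
finite-dimensional graded pieces. Let `ṽ(∑ f_i t^i) = (s, v f_s)` be the extended valuation
(with values in `ℤ × Γ`, ordered by `(k,x) > (ℓ,y)` iff `k < ℓ`, or `k = ℓ` and `x > y`).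
If `f 1, …, f t` are nonzero elements of `A` whose values generate the value semigroup
`S(A, ṽ)`, then `f 1, …, f t` generate `A` as a `ℂ`-algebra. -/
theorem sagbi_generation_for_graded_algebras
    (F : Type*) [Field F] [Algebra ℂ F]
    (Γ : Type*) [AddCommGroup Γ] [LinearOrder Γ] [IsOrderedAddMonoid Γ]
    (v : F → Γ)
    (hv_add : ∀ f g : F, f ≠ 0 → g ≠ 0 → f + g ≠ 0 → min (v f) (v g) ≤ v (f + g))
    (hv_smul : ∀ (c : ℂ) (f : F), c ≠ 0 → f ≠ 0 → v (c • f) = v f)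
    (hv_mul : ∀ f g : F, f ≠ 0 → g ≠ 0 → v (f * g) = v f + v g)
    (hv_leaves : ∀ f g : F, f ≠ 0 → g ≠ 0 → v f = v g →
      ∃ c : ℂ, c ≠ 0 ∧ (g - c • f = 0 ∨ v g < v (g - c • f)))
    (A : Subalgebra ℂ (Polynomial F))
    -- `A` is graded: it contains the homogeneous components of all its elements
    (hA_graded : ∀ p ∈ A, ∀ k : ℕ, Polynomial.C (p.coeff k) * Polynomial.X ^ k ∈ A)
    -- the graded pieces are finite-dimensional over `ℂ`
    (hA_findim : ∀ k : ℕ, FiniteDimensional ℂ ↥(gradedPiece A k))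
    -- the extended valuation `ṽ`
    (vt : Polynomial F → ℤ × Γ)
    (hvt : ∀ p : Polynomial F, p ≠ 0 → vt p = ((p.natDegree : ℤ), v p.leadingCoeff))
    (t : ℕ) (f : Fin t → Polynomial F)
    (hfA : ∀ i, f i ∈ A) (hf_ne : ∀ i, f i ≠ 0)
    -- the values `ṽ (f i)` generate the value semigroup `S(A, ṽ)`
    (hgen : ∀ p ∈ A, p ≠ 0 → ∃ m : Fin t → ℕ, vt p = ∑ i, m i • vt (f i)) :
    A ≤ Algebra.adjoin ℂ (Set.range f) :=
  sagbi_generation_for_graded_algebras_general F Γ v hv_add hv_smul hv_mul hv_leaves A hA_graded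
    hA_findim vt hvt t f hfA hf_ne hgen
end
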